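/- Let A be a diagonal point configuration: its first row is the all-ones vector, its first column is (1,0,…,0)^T, and after grouping the remaining n rows into groups of sizes n_1,…,n_r and the remaining N−1 columns into groups of sizes N_1,…,N_r, the matrix Â (without the first row and first column) is block diagonal with blocks Ã_1,…,Ã_r (Ã_j of size n_j×N_j). Let A_j be the diagonal configurations: A_j is the (1+n_j)×(1+N_j) matrix with first row all ones and remaining rows (0, Ã_j), of codimension m_j = N_j − n_j, so m = m_1+…+m_r. Then for any Gale duals B_j of the A_j there is a Gale dual B of A such that, writing t = (t_1,…,t_r) with t_j ∈ ℂ^{m_j}, the cuspidal forms satisfy P_A(t) = P_{A_1}(t_1)·P_{A_2}(t_2)···P_{A_r}(t_r). -/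

import Mathlib

open Matrix MvPolynomial Finset

/-- Squared maximal minor of `Ahat` on the column set `s` (independent of column order). -/
noncomputable def detSq {rho kappa : Type*} [Fintype rho] [Fintype kappa] [DecidableEq kappa]
    (Ahat : Matrix rho kappa ℝ) (s : Finset kappa) (h : s.card = Fintype.card rho) : ℝ :=
  (Ahat.submatrix (Fintype.equivFin rho).symm
      fun i => ((s.equivFin.symm (Fin.cast h.symm i)) : kappa)).det ^ 2

/-- The cuspidal form `P_A(t) = Σ_{#σ = n} det(Â_σ)² ∏_{k∈σ} ⟨β_k, t⟩`, as a
multivariate polynomial in the variables `t`. -/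
noncomputable def cuspFormPoly {rho kappa mu : Type*}
    [Fintype rho] [Fintype kappa] [Fintype mu] [DecidableEq kappa]
    (Ahat : Matrix rho kappa ℝ) (B : Matrix kappa mu ℝ) : MvPolynomial mu ℝ :=
  ∑ s ∈ (univ.powersetCard (Fintype.card rho)).attach,
    C (detSq Ahat s.1 (mem_powersetCard.mp s.2).2) *
      ∏ k ∈ s.1, ∑ l, C (B k l) * X l

/-- `B` is a Gale dual of `A`: it has full column rank and `A * B = 0`. -/
def IsGaleDual {rho kappa mu : Type*} [Fintype rho] [Fintype kappa] [Fintype mu]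
    (A : Matrix rho kappa ℝ) (B : Matrix kappa mu ℝ) : Prop :=
  B.rank = Fintype.card mu ∧ A * B = 0

/-- `A` is a pyramid: all columns but one span a subspace of dimension at most
(number of rows minus one). -/
def IsPyramid {rho kappa : Type*} [Fintype rho] (A : Matrix rho kappa ℝ) : Prop :=
  ∃ j : kappa, Module.finrank ℝ
      (Submodule.span ℝ ((fun k => fun i => A i k) '' {k | k ≠ j})) ≤ Fintype.card rho - 1


/-- The point configuration with first row all ones, first column `(1,0,…,0)ᵀ` and
remaining block the given matrix `M`. -/
def diagConfig {a b : ℕ} (M : Matrix (Fin a) (Fin b) ℝ) :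
    Matrix (Option (Fin a)) (Option (Fin b)) ℝ :=
  Matrix.of fun i k =>
    match i, k with
    | none, _ => 1
    | some _, none => 0
    | some p, some q => M p q

/-- The diagonal point configuration assembled from the blocks `At j`. -/
def bigDiagConfig {r : ℕ} {nn NN : Fin r → ℕ}
    (At : ∀ j, Matrix (Fin (nn j)) (Fin (NN j)) ℝ) :
    Matrix (Option (Σ j, Fin (nn j))) (Option (Σ j, Fin (NN j))) ℝ :=
  Matrix.of fun i k =>
    match i, k with
    | none, _ => 1
    | some _, none => 0
    | some ⟨j, p⟩, some ⟨j', q⟩ => if h : j = j' then At j' (h ▸ p) q else 0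

lemma sq_det_submatrix_eq {R : Type*} [CommRing R] {α β : Type*} [Fintype α] [DecidableEq α]
    [Fintype β] [DecidableEq β] (M : Matrix β β R) (g h : α ≃ β) :
    (M.submatrix g h).det ^ 2 = M.det ^ 2 := by
  have h1 : M.submatrix g h = (M.submatrix g g).submatrix id ⇑(h.trans g.symm) := by
    ext a b; simp
  rw [h1, Matrix.det_permute', Matrix.det_submatrix_equiv_self, mul_pow]
  rcases Int.units_eq_one_or (Equiv.Perm.sign (h.trans g.symm)) with hs | hs <;>
    simp [hs]

lemma detSq_eq {rho κ α : Type*} [Fintype rho] [Fintype κ] [DecidableEq κ] [Fintype α]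
    [DecidableEq α]
    (Ahat : Matrix rho κ ℝ) (s : Finset κ) (h : s.card = Fintype.card rho)
    (e : α ≃ rho) (f : α ≃ {x // x ∈ s}) :
    detSq Ahat s h = (Ahat.submatrix e (fun a => ((f a : κ)))).det ^ 2 := by
  set e₀ : Fin (Fintype.card rho) ≃ rho := (Fintype.equivFin rho).symm with he₀
  set f₀ : Fin (Fintype.card rho) ≃ {x // x ∈ s} := (finCongr h.symm).trans s.equivFin.symm
    with hf₀
  have h1 : detSq Ahat s h = (Ahat.submatrix e₀ (fun i => ((f₀ i : κ)))).det ^ 2 := rfl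
  have h2 : Ahat.submatrix e (fun a => ((f a : κ)))
      = (Ahat.submatrix e₀ (fun i => ((f₀ i : κ)))).submatrix (e.trans e₀.symm)
        (f.trans f₀.symm) := by
    ext a b; simp
  rw [h1, h2, sq_det_submatrix_eq]

lemma det_blockDiagonal'_prod {R : Type*} [CommRing R] {ι : Type*} [Fintype ι] [DecidableEq ι]
    [LinearOrder ι] {b : ι → Type*} [∀ i, Fintype (b i)] [∀ i, DecidableEq (b i)]
    (M : ∀ i, Matrix (b i) (b i) R) :
    (Matrix.blockDiagonal' M).det = ∏ i, (M i).det := by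
  rw [(Matrix.blockTriangular_blockDiagonal' M).det]
  have key : ∀ a : ι, ((Matrix.blockDiagonal' M).toSquareBlock Sigma.fst a).det = (M a).det := by
    intro a
    let ea : {ik : Σ i, b i // ik.1 = a} ≃ b a :=
      { toFun := fun x => cast (congrArg b x.2) x.1.2
        invFun := fun q => ⟨⟨a, q⟩, rfl⟩
        left_inv := by rintro ⟨⟨j, p⟩, hx⟩; subst hx; rfl
        right_inv := fun q => rfl }
    have hts : (Matrix.blockDiagonal' M).toSquareBlock Sigma.fst a = (M a).submatrix ea ea := by
      ext x y
      obtain ⟨⟨j, p⟩, hx⟩ := x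
      obtain ⟨⟨j', q⟩, hy⟩ := y
      dsimp only at hx hy
      subst hx; subst hy
      simp [Matrix.toSquareBlock, Matrix.toSquareBlockProp, ea, Matrix.blockDiagonal'_apply_eq]
    rw [hts, Matrix.det_submatrix_equiv_self]
  rw [Finset.prod_congr rfl fun a _ => key a]
  exact Finset.prod_subset (Finset.subset_univ _) (fun a _ ha =>
    have : IsEmpty (b a) :=
      ⟨fun q => ha (Finset.mem_image.mpr ⟨⟨a, q⟩, Finset.mem_univ _, rfl⟩)⟩
    Matrix.det_isEmpty)

lemma detSq_eq_zero_of_zero_col {rho κ : Type*} [Fintype rho] [Fintype κ] [DecidableEq κ]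
    (Ahat : Matrix rho κ ℝ) (s : Finset κ) (h : s.card = Fintype.card rho)
    {k : κ} (hk : k ∈ s) (hz : ∀ i, Ahat i k = 0) :
    detSq Ahat s h = 0 := by
  have hcol : ∀ i, (Ahat.submatrix (Fintype.equivFin rho).symm
      fun i => ((s.equivFin.symm (Fin.cast h.symm i)) : κ)) i
        (Fin.cast h (s.equivFin ⟨k, hk⟩)) = 0 := by
    intro i
    have h2 : Fin.cast h.symm (Fin.cast h (s.equivFin ⟨k, hk⟩)) = s.equivFin ⟨k, hk⟩ := rfl
    simp only [Matrix.submatrix_apply, h2, Equiv.symm_apply_apply]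
    exact hz _
  unfold detSq
  rw [Matrix.det_eq_zero_of_column_eq_zero _ hcol]
  norm_num


noncomputable def detSqIf {rho kappa : Type*} [Fintype rho] [Fintype kappa] [DecidableEq kappa]
    (Ahat : Matrix rho kappa ℝ) (s : Finset kappa) : ℝ :=
  if h : s.card = Fintype.card rho then detSq Ahat s h else 0

lemma cuspFormPoly_eq_sum {rho kappa mu : Type*}
    [Fintype rho] [Fintype kappa] [Fintype mu] [DecidableEq kappa]
    (Ahat : Matrix rho kappa ℝ) (B : Matrix kappa mu ℝ) :
    cuspFormPoly Ahat B = ∑ s ∈ univ.powersetCard (Fintype.card rho),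
      C (detSqIf Ahat s) * ∏ k ∈ s, ∑ l, C (B k l) * X l := by
  rw [← Finset.sum_attach (univ.powersetCard (Fintype.card rho))
    (fun s => C (detSqIf Ahat s) * ∏ k ∈ s, ∑ l, C (B k l) * X l)]
  unfold cuspFormPoly
  refine Finset.sum_congr rfl fun x _ => ?_
  rw [detSqIf, dif_pos ((mem_powersetCard.mp x.2).2)]

lemma sum_powersetCard_option {M γ : Type*} [AddCommMonoid M] [Fintype γ] [DecidableEq γ]
    (n : ℕ) (g : Finset (Option γ) → M)
    (hnone : ∀ s : Finset (Option γ), s.card = n → none ∈ s → g s = 0) :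
    ∑ s ∈ (univ : Finset (Option γ)).powersetCard n, g s
      = ∑ T ∈ (univ : Finset γ).powersetCard n, g (T.image some) := by
  rw [← Finset.sum_image (g := Finset.image some)
    (fun x _ y _ h => Finset.image_injective (Option.some_injective γ) h)]
  refine (Finset.sum_subset ?_ ?_).symm
  · intro s hs
    obtain ⟨T, hT, rfl⟩ := Finset.mem_image.mp hs
    exact mem_powersetCard.mpr ⟨Finset.subset_univ _,
      by rw [Finset.card_image_of_injective _ (Option.some_injective γ)];
         exact (mem_powersetCard.mp hT).2⟩
  · intro s hs hnot
    refine hnone s (mem_powersetCard.mp hs).2 ?_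
    by_contra hn
    apply hnot
    have himg : (s.preimage some ((Option.some_injective γ).injOn)).image some
        = s := by
      ext x
      cases x with
      | none => simp [hn]
      | some a => simp [Finset.mem_preimage]
    refine Finset.mem_image.mpr ⟨_, mem_powersetCard.mpr ⟨Finset.subset_univ _, ?_⟩, himg⟩
    rw [← Finset.card_image_of_injective _ (Option.some_injective γ), himg]
    exact (mem_powersetCard.mp hs).2

lemma det_eq_zero_of_unbalanced {R : Type*} [CommRing R] {m : Type*} [Fintype m] [DecidableEq m]
    (M : Matrix m m R) {ι : Type*} [DecidableEq ι] (fr fc : m → ι) (j : ι)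
    (hz : ∀ i i', fc i' = j → fr i ≠ j → M i i' = 0)
    (hcard : (univ.filter fun i => fr i = j).card < (univ.filter fun i' => fc i' = j).card) :
    M.det = 0 := by
  rw [Matrix.det_apply]
  refine Finset.sum_eq_zero fun σ _ => ?_
  suffices hμ : ∃ i', fc i' = j ∧ fr (σ i') ≠ j by
    obtain ⟨i', h1, h2⟩ := hμ
    have hp : (∏ i : m, M (σ i) i) = 0 :=
      Finset.prod_eq_zero (mem_univ i') (hz (σ i') i' h1 h2)
    rw [hp, smul_zero]
  by_contra hcon
  push_neg at hcon
  have hsub : (univ.filter fun i' => fc i' = j).image σ ⊆ univ.filter fun i => fr i = j := by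
    intro x hx
    simp only [Finset.mem_image, Finset.mem_filter, Finset.mem_univ, true_and] at hx ⊢
    obtain ⟨i', hi', rfl⟩ := hx
    exact hcon i' hi'
  have hc2 := Finset.card_le_card hsub
  rw [Finset.card_image_of_injective _ σ.injective] at hc2
  omega

def sigmaFstSubtypeEquiv {ι : Type*} (b : ι → Type*) (a : ι) :
    {ik : Σ i, b i // ik.1 = a} ≃ b a where
  toFun x := cast (congrArg b x.2) x.1.2
  invFun q := ⟨⟨a, q⟩, rfl⟩
  left_inv := by rintro ⟨⟨j, p⟩, hx⟩; subst hx; rfl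
  right_inv q := rfl


-- entry lemmas
variable {r : ℕ} {nn NN : Fin r → ℕ}

lemma diagConfig_none {a b : ℕ} (M : Matrix (Fin a) (Fin b) ℝ) (k) :
    diagConfig M none k = 1 := by cases k <;> rfl

lemma diagConfig_some_none {a b : ℕ} (M : Matrix (Fin a) (Fin b) ℝ) (p) :
    diagConfig M (some p) none = 0 := rfl

lemma diagConfig_some_some {a b : ℕ} (M : Matrix (Fin a) (Fin b) ℝ) (p q) :
    diagConfig M (some p) (some q) = M p q := rfl

lemma bigDiagConfig_none (At : ∀ j, Matrix (Fin (nn j)) (Fin (NN j)) ℝ) (k) :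
    bigDiagConfig At none k = 1 := by cases k <;> rfl

lemma bigDiagConfig_some_none (At : ∀ j, Matrix (Fin (nn j)) (Fin (NN j)) ℝ) (j p) :
    bigDiagConfig At (some ⟨j, p⟩) none = 0 := rfl

lemma bigDiagConfig_some_some (At : ∀ j, Matrix (Fin (nn j)) (Fin (NN j)) ℝ) (j p j' q) :
    bigDiagConfig At (some ⟨j, p⟩) (some ⟨j', q⟩)
      = if h : j = j' then At j' (h ▸ p) q else 0 := rfl

def bigGale {r : ℕ} {nn mm : Fin r → ℕ}
    (Bj : ∀ j, Matrix (Option (Fin (nn j + mm j))) (Fin (mm j)) ℝ) :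
    Matrix (Option (Σ j, Fin (nn j + mm j))) (Σ j, Fin (mm j)) ℝ
  | none, jl => Bj jl.1 none jl.2
  | some x, jl => if h : x.1 = jl.1 then Bj jl.1 (some (h ▸ x.2)) jl.2 else 0

section
variable {mm : Fin r → ℕ} (Bj : ∀ j, Matrix (Option (Fin (nn j + mm j))) (Fin (mm j)) ℝ)

lemma bigGale_none (j l) : bigGale Bj none ⟨j, l⟩ = Bj j none l := rfl

lemma bigGale_some_eq (j q l) : bigGale Bj (some ⟨j, q⟩) ⟨j, l⟩ = Bj j (some q) l := by
  show dite _ _ _ = _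
  rw [dif_pos rfl]

lemma bigGale_some_ne {j' j} (h : j' ≠ j) (q l) : bigGale Bj (some ⟨j', q⟩) ⟨j, l⟩ = 0 := by
  show dite _ _ _ = _
  rw [dif_neg h]

end


section GaleDual

variable {r : ℕ} {nn mm : Fin r → ℕ}

lemma bigGale_isGaleDual (At : ∀ j, Matrix (Fin (nn j)) (Fin (nn j + mm j)) ℝ)
    (Bj : ∀ j, Matrix (Option (Fin (nn j + mm j))) (Fin (mm j)) ℝ)
    (hGalej : ∀ j, IsGaleDual (diagConfig (At j)) (Bj j)) :
    IsGaleDual (bigDiagConfig At) (bigGale Bj) := by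
  have hsum1 : ∀ j l, ∑ k : Option (Fin (nn j + mm j)), Bj j k l = 0 := by
    intro j l
    have h0 := congrFun (congrFun (hGalej j).2 none) l
    simpa [Matrix.mul_apply, diagConfig_none] using h0
  have hsum2 : ∀ j p l, ∑ q, At j p q * Bj j (some q) l = 0 := by
    intro j p l
    have h0 := congrFun (congrFun (hGalej j).2 (some p)) l
    simpa [Matrix.mul_apply, Fintype.sum_option, diagConfig_some_none,
      diagConfig_some_some] using h0
  constructor
  · -- rank
    have hli : LinearIndependent ℝ (fun jl : Σ j, Fin (mm j) => (bigGale Bj)ᵀ jl) := by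
      rw [Fintype.linearIndependent_iff]
      rintro g hg ⟨j, l⟩
      have hBjli : LinearIndependent ℝ (fun l => (Bj j)ᵀ l) := by
        rw [linearIndependent_iff_card_eq_finrank_span]
        have := (hGalej j).1
        rw [Matrix.rank_eq_finrank_span_cols] at this
        rw [show (Bj j).col = fun l => (Bj j)ᵀ l from rfl] at this
        simpa [Set.finrank] using this.symm
      have hgk : ∀ k : Option (Σ j, Fin (nn j + mm j)),
          (∑ jl : Σ j, Fin (mm j), g jl * bigGale Bj k jl) = 0 := by
        intro k
        have := congrFun hg k
        simpa [Finset.sum_apply] using this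
      have hsome : ∀ q : Fin (nn j + mm j), (∑ l', g ⟨j, l'⟩ * Bj j (some q) l') = 0 := by
        intro q
        have h0 := hgk (some ⟨j, q⟩)
        rw [← Finset.univ_sigma_univ, Finset.sum_sigma] at h0
        rw [Finset.sum_eq_single j] at h0
        · rw [← h0]
          exact Finset.sum_congr rfl fun l' _ => by rw [bigGale_some_eq]
        · intro j' _ hj'
          refine Finset.sum_eq_zero fun l' _ => ?_
          rw [bigGale_some_ne _ (Ne.symm hj'), mul_zero]
        · intro h; exact absurd (Finset.mem_univ j) h
      have hnone : (∑ l', g ⟨j, l'⟩ * Bj j none l') = 0 := by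
        have hrw : ∀ l', Bj j none l' = -∑ q, Bj j (some q) l' := by
          intro l'
          have := hsum1 j l'
          rw [Fintype.sum_option] at this
          linarith
        calc (∑ l', g ⟨j, l'⟩ * Bj j none l')
            = ∑ l', -∑ q, g ⟨j, l'⟩ * Bj j (some q) l' :=
              Finset.sum_congr rfl fun l' _ => by rw [hrw l', mul_neg, Finset.mul_sum]
          _ = -∑ l', ∑ q, g ⟨j, l'⟩ * Bj j (some q) l' := by
              rw [Finset.sum_neg_distrib]
          _ = -∑ q, ∑ l', g ⟨j, l'⟩ * Bj j (some q) l' := by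
              rw [Finset.sum_comm]
          _ = 0 := by simp [hsome]
      have hcol : (∑ l', g ⟨j, l'⟩ • (Bj j)ᵀ l') = 0 := by
        funext k
        rw [Finset.sum_apply]
        cases k with
        | none => simpa using hnone
        | some q => simpa using hsome q
      exact Fintype.linearIndependent_iff.mp hBjli (fun l' => g ⟨j, l'⟩) hcol l
    rw [Matrix.rank_eq_finrank_span_cols]
    rw [show (bigGale Bj).col = fun jl => (bigGale Bj)ᵀ jl from rfl]
    have := linearIndependent_iff_card_eq_finrank_span.mp hli
    simpa [Set.finrank] using this.symm
  · -- product zero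
    ext i jl
    obtain ⟨j, l⟩ := jl
    rw [Matrix.mul_apply, Matrix.zero_apply, Fintype.sum_option]
    cases i with
    | none =>
      simp only [bigDiagConfig_none, one_mul]
      rw [← Finset.univ_sigma_univ, Finset.sum_sigma]
      rw [Finset.sum_eq_single j]
      · have h1 := hsum1 j l
        rw [Fintype.sum_option] at h1
        rw [bigGale_none]
        rw [Finset.sum_congr rfl fun q _ => by rw [bigGale_some_eq]]
        exact h1
      · intro j' _ hj'
        refine Finset.sum_eq_zero fun q _ => ?_
        rw [bigGale_some_ne _ hj']
      · intro h; exact absurd (Finset.mem_univ j) h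
    | some x =>
      obtain ⟨j0, p⟩ := x
      rw [bigDiagConfig_some_none, zero_mul, zero_add]
      rw [← Finset.univ_sigma_univ, Finset.sum_sigma]
      by_cases hj : j0 = j
      · subst hj
        rw [Finset.sum_eq_single j0]
        · rw [Finset.sum_congr rfl fun q _ => by
            rw [bigGale_some_eq, bigDiagConfig_some_some, dif_pos rfl]]
          exact hsum2 j0 p l
        · intro j' _ hj'
          refine Finset.sum_eq_zero fun q _ => ?_
          rw [bigGale_some_ne _ hj', mul_zero]
        · intro h; exact absurd (Finset.mem_univ j0) h
      · refine Finset.sum_eq_zero fun j' _ => Finset.sum_eq_zero fun q _ => ?_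
        by_cases h' : j0 = j'
        · subst h'
          rw [bigGale_some_ne _ hj, mul_zero]
        · rw [bigDiagConfig_some_some, dif_neg h', zero_mul]
end GaleDual


section Poly

variable {r : ℕ} {nn mm : Fin r → ℕ}

-- Collapse of the big linear form at a column in block j
lemma bigGale_linform (Bj : ∀ j, Matrix (Option (Fin (nn j + mm j))) (Fin (mm j)) ℝ)
    (j : Fin r) (q : Fin (nn j + mm j)) :
    (∑ jl : Σ j, Fin (mm j), C (bigGale Bj (some ⟨j, q⟩) jl) * X jl)
      = ∑ l, C (Bj j (some q) l) * X (⟨j, l⟩ : Σ j, Fin (mm j)) := by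
  rw [← Finset.univ_sigma_univ, Finset.sum_sigma]
  rw [Finset.sum_eq_single j]
  · exact Finset.sum_congr rfl fun l _ => by rw [bigGale_some_eq]
  · intro j' _ hj'
    refine Finset.sum_eq_zero fun l _ => ?_
    rw [bigGale_some_ne _ (Ne.symm hj'), map_zero, zero_mul]
  · intro h; exact absurd (Finset.mem_univ j) h

-- per-block renamed cusp form
lemma rename_cuspForm_block (At : ∀ j, Matrix (Fin (nn j)) (Fin (nn j + mm j)) ℝ)
    (Bj : ∀ j, Matrix (Option (Fin (nn j + mm j))) (Fin (mm j)) ℝ) (j : Fin r) :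
    MvPolynomial.rename (fun l : Fin (mm j) => (⟨j, l⟩ : Σ j, Fin (mm j)))
        (cuspFormPoly ((diagConfig (At j)).submatrix some id) (Bj j))
      = ∑ Tj ∈ (univ : Finset (Fin (nn j + mm j))).powersetCard (Fintype.card (Fin (nn j))),
          C (detSqIf ((diagConfig (At j)).submatrix some id) (Tj.image some)) *
            ∏ q ∈ Tj, ∑ l, C (Bj j (some q) l) * X (⟨j, l⟩ : Σ j, Fin (mm j)) := by
  rw [cuspFormPoly_eq_sum]
  rw [sum_powersetCard_option (Fintype.card (Fin (nn j)))
    (fun s => C (detSqIf ((diagConfig (At j)).submatrix some id) s) *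
      ∏ k ∈ s, ∑ l, C (Bj j k l) * X l)
    (by
      intro s hcard hnone
      have hz : detSqIf ((diagConfig (At j)).submatrix some id) s = 0 := by
        rw [detSqIf, dif_pos (by simpa using hcard)]
        exact detSq_eq_zero_of_zero_col _ _ _ hnone (fun p => rfl)
      simp only [hz, map_zero, zero_mul])]
  rw [map_sum]
  refine Finset.sum_congr rfl fun Tj _ => ?_
  rw [_root_.map_mul, rename_C, map_prod]
  congr 1
  rw [Finset.prod_image (fun x _ y _ h => Option.some_injective _ h)]
  refine Finset.prod_congr rfl fun q _ => ?_
  rw [map_sum]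
  exact Finset.sum_congr rfl fun l _ => by rw [_root_.map_mul, rename_C, rename_X]

end Poly


section Poly2
variable {r : ℕ} {nn mm : Fin r → ℕ}

lemma detSq_big_unbalanced (At : ∀ j, Matrix (Fin (nn j)) (Fin (nn j + mm j)) ℝ)
    (T : Finset (Σ j, Fin (nn j + mm j)))
    (h : (T.image some).card = Fintype.card (Σ j, Fin (nn j)))
    (jstar : Fin r)
    (hstar : nn jstar < (T.preimage (Sigma.mk jstar) (sigma_mk_injective.injOn)).card) :
    detSq ((bigDiagConfig At).submatrix some id) (T.image some) h = 0 := by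
  classical
  unfold detSq
  set e₀ : Fin (Fintype.card (Σ j, Fin (nn j))) ≃ (Σ j, Fin (nn j)) :=
    (Fintype.equivFin (Σ j, Fin (nn j))).symm with he₀
  set f₀ : Fin (Fintype.card (Σ j, Fin (nn j))) → Option (Σ j, Fin (nn j + mm j)) :=
    fun i => ((T.image some).equivFin.symm (Fin.cast h.symm i) : Option (Σ j, Fin (nn j + mm j)))
    with hf₀
  have hdet : (((bigDiagConfig At).submatrix some id).submatrix e₀ f₀).det = 0 := by
    apply det_eq_zero_of_unbalanced _ (fun i => some ((e₀ i).1))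
      (fun i => Option.map Sigma.fst (f₀ i)) (some jstar)
    · -- zero entries
      intro i i' h1 h2
      simp only [Matrix.submatrix_apply, id]
      cases hf : f₀ i' with
      | none => rw [hf] at h1; simp at h1
      | some x =>
        rw [hf] at h1
        simp only [Option.map_some, Option.some.injEq] at h1
        obtain ⟨jx, q⟩ := x
        generalize he : e₀ i = y at h2 ⊢
        obtain ⟨j1, p⟩ := y
        have hne : j1 ≠ jx := by
          intro hc
          exact h2 (congrArg some (hc.trans h1))
        rw [bigDiagConfig_some_some, dif_neg hne]
    · -- cardinalities
      have hr : (univ.filter fun i => some ((e₀ i).1) = some jstar).card = nn jstar := by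
        have hb : (univ : Finset (Fin (nn jstar))).card
            = (univ.filter fun i => some ((e₀ i).1) = some jstar).card := by
          refine Finset.card_bij (fun p _ => e₀.symm ⟨jstar, p⟩) ?_ ?_ ?_
          · intro p _
            simp
          · intro p _ p' _ hpp
            have h1 : (⟨jstar, p⟩ : Σ j, Fin (nn j)) = ⟨jstar, p'⟩ := e₀.symm.injective hpp
            exact eq_of_heq (Sigma.mk.inj_iff.mp h1).2
          · intro i hi
            simp only [Finset.mem_filter, Finset.mem_univ, true_and,
              Option.some.injEq] at hi
            refine ⟨sigmaFstSubtypeEquiv (fun j => Fin (nn j)) jstar ⟨e₀ i, hi⟩,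
              Finset.mem_univ _, ?_⟩
            have hv : (⟨jstar, sigmaFstSubtypeEquiv (fun j => Fin (nn j)) jstar ⟨e₀ i, hi⟩⟩ :
                Σ j, Fin (nn j)) = e₀ i := by
              have h5 := (sigmaFstSubtypeEquiv (fun j => Fin (nn j)) jstar).symm_apply_apply
                ⟨e₀ i, hi⟩
              exact congrArg Subtype.val h5
            rw [hv, Equiv.symm_apply_apply]
        rw [← hb, Finset.card_univ, Fintype.card_fin]
      have hc : (univ.filter fun i => Option.map Sigma.fst (f₀ i) = some jstar).card
          = (T.preimage (Sigma.mk jstar) (sigma_mk_injective.injOn)).card := by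
        have hb : (T.preimage (Sigma.mk jstar) (sigma_mk_injective.injOn)).card
            = (univ.filter fun i => Option.map Sigma.fst (f₀ i) = some jstar).card := by
          refine Finset.card_bij
            (fun q hq => Fin.cast h ((T.image some).equivFin
              ⟨some ⟨jstar, q⟩, Finset.mem_image_of_mem some (Finset.mem_preimage.mp hq)⟩))
            ?_ ?_ ?_
          · intro q hq
            simp only [Finset.mem_filter, Finset.mem_univ, true_and, hf₀]
            rw [show Fin.cast h.symm (Fin.cast h ((T.image some).equivFin
                ⟨some ⟨jstar, q⟩, Finset.mem_image_of_mem some (Finset.mem_preimage.mp hq)⟩))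
                = (T.image some).equivFin
                ⟨some ⟨jstar, q⟩, Finset.mem_image_of_mem some (Finset.mem_preimage.mp hq)⟩
              from rfl]
            rw [Equiv.symm_apply_apply]
            rfl
          · intro q hq q' hq' hqq
            have h1 : ((T.image some).equivFin
                ⟨some ⟨jstar, q⟩, Finset.mem_image_of_mem some (Finset.mem_preimage.mp hq)⟩)
                = ((T.image some).equivFin
                ⟨some ⟨jstar, q'⟩, Finset.mem_image_of_mem some (Finset.mem_preimage.mp hq')⟩) := by
              refine Fin.ext ?_
              have h0 := congrArg Fin.val hqq
              exact h0
            have h2 := (T.image some).equivFin.injective h1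
            have h3 := congrArg Subtype.val h2
            simp only [Option.some.injEq] at h3
            have h4 : (⟨jstar, q⟩ : Σ j, Fin (nn j + mm j)) = ⟨jstar, q'⟩ := h3
            exact eq_of_heq (Sigma.mk.inj_iff.mp h4).2
          · intro i' hi'
            simp only [Finset.mem_filter, Finset.mem_univ, true_and] at hi'
            have hval : f₀ i' ∈ T.image some :=
              ((T.image some).equivFin.symm (Fin.cast h.symm i')).2
            obtain ⟨x, hxT, hxe⟩ := Finset.mem_image.mp hval
            rw [← hxe] at hi'
            simp only [Option.map_some, Option.some.injEq] at hi'
            obtain ⟨jx, q⟩ := x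
            have hjx : jx = jstar := hi'
            subst hjx
            have hqmem : q ∈ T.preimage (Sigma.mk jx) sigma_mk_injective.injOn :=
              Finset.mem_preimage.mpr hxT
            refine ⟨q, hqmem, ?_⟩
            rw [show (⟨some ⟨jx, q⟩,
                Finset.mem_image_of_mem some (Finset.mem_preimage.mp hqmem)⟩ :
                  {x // x ∈ T.image some})
              = (T.image some).equivFin.symm (Fin.cast h.symm i') from Subtype.ext hxe]
            rw [Equiv.apply_symm_apply]
            exact Fin.ext rfl
        rw [hb]
      rw [hr, hc]
      exact hstar
  rw [hdet]
  norm_num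
end Poly2


section Poly3
variable {r : ℕ} {nn mm : Fin r → ℕ}

lemma detSq_big_balanced (At : ∀ j, Matrix (Fin (nn j)) (Fin (nn j + mm j)) ℝ)
    (T : Finset (Σ j, Fin (nn j + mm j)))
    (hbal : ∀ j, (T.preimage (Sigma.mk j) sigma_mk_injective.injOn).card = nn j)
    (h : (T.image some).card = Fintype.card (Σ j, Fin (nn j)))
    (hj : ∀ j, ((T.preimage (Sigma.mk j) sigma_mk_injective.injOn).image some).card
        = Fintype.card (Fin (nn j))) :
    detSq ((bigDiagConfig At).submatrix some id) (T.image some) h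
      = ∏ j, detSq ((diagConfig (At j)).submatrix some id)
          ((T.preimage (Sigma.mk j) sigma_mk_injective.injOn).image some) (hj j) := by
  classical
  have hcardpre : ∀ j, Fintype.card (Fin (nn j))
      = Fintype.card {q // q ∈ T.preimage (Sigma.mk j) sigma_mk_injective.injOn} := by
    intro j; rw [Fintype.card_coe, hbal j, Fintype.card_fin]
  let ej : ∀ j, Fin (nn j) ≃ {q // q ∈ T.preimage (Sigma.mk j) sigma_mk_injective.injOn} :=
    fun j => Fintype.equivOfCardEq (hcardpre j)
  let Nmat : ∀ j, Matrix (Fin (nn j)) (Fin (nn j)) ℝ :=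
    fun j => Matrix.of fun p i => At j p ((ej j i).val)
  have hmemT : ∀ j (i : Fin (nn j)), (⟨j, (ej j i).val⟩ : Σ j, Fin (nn j + mm j)) ∈ T :=
    fun j i => Finset.mem_preimage.mp (ej j i).2
  let g : (Σ j, Fin (nn j)) → {x // x ∈ T.image some} :=
    fun x => ⟨some ⟨x.1, (ej x.1 x.2).val⟩, Finset.mem_image_of_mem some (hmemT x.1 x.2)⟩
  have hginj : Function.Injective g := by
    rintro ⟨j1, i1⟩ ⟨j2, i2⟩ hxy
    have h1 : (some ⟨j1, (ej j1 i1).val⟩ : Option (Σ j, Fin (nn j + mm j)))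
        = some ⟨j2, (ej j2 i2).val⟩ := congrArg Subtype.val hxy
    have h2 := Option.some.inj h1
    obtain ⟨hj12, hsnd⟩ := Sigma.mk.inj_iff.mp h2
    subst hj12
    have h3 : (ej j1 i1).val = (ej j1 i2).val := eq_of_heq hsnd
    have h4 := (ej j1).injective (Subtype.ext h3)
    rw [h4]
  have hgbij : Function.Bijective g := by
    rw [Fintype.bijective_iff_injective_and_card]
    exact ⟨hginj, by rw [Fintype.card_coe, h]⟩
  let f : (Σ j, Fin (nn j)) ≃ {x // x ∈ T.image some} := Equiv.ofBijective g hgbij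
  have hfval : ∀ x : Σ j, Fin (nn j),
      (f x : Option (Σ j, Fin (nn j + mm j))) = some ⟨x.1, (ej x.1 x.2).val⟩ :=
    fun x => rfl
  rw [detSq_eq _ _ _ (Equiv.refl _) f]
  have hM : ((bigDiagConfig At).submatrix some id).submatrix (⇑(Equiv.refl (Σ j, Fin (nn j))))
      (fun a => ((f a : Option (Σ j, Fin (nn j + mm j)))))
      = Matrix.blockDiagonal' Nmat := by
    ext x y
    obtain ⟨j1, p⟩ := x
    obtain ⟨j2, i⟩ := y
    simp only [Matrix.submatrix_apply, Equiv.coe_refl, id, hfval]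
    by_cases hjj : j1 = j2
    · subst hjj
      rw [Matrix.blockDiagonal'_apply_eq, bigDiagConfig_some_some, dif_pos rfl]
      rfl
    · rw [bigDiagConfig_some_some, dif_neg hjj, Matrix.blockDiagonal'_apply_ne _ _ _ hjj]
  rw [hM, det_blockDiagonal'_prod, ← Finset.prod_pow]
  refine Finset.prod_congr rfl fun j _ => ?_
  let gj : Fin (nn j) →
      {x // x ∈ (T.preimage (Sigma.mk j) sigma_mk_injective.injOn).image some} :=
    fun i => ⟨some (ej j i).val, Finset.mem_image_of_mem some (ej j i).2⟩
  have hgjbij : Function.Bijective gj := by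
    rw [Fintype.bijective_iff_injective_and_card]
    constructor
    · intro i1 i2 hii
      have h1 : (some (ej j i1).val : Option (Fin (nn j + mm j))) = some (ej j i2).val :=
        congrArg Subtype.val hii
      exact (ej j).injective (Subtype.ext (Option.some.inj h1))
    · rw [Fintype.card_coe, hj j]
  rw [detSq_eq _ _ (hj j) (Equiv.refl _) (Equiv.ofBijective gj hgjbij)]
  congr 1
end Poly3


section Poly4
variable {r : ℕ} {nn mm : Fin r → ℕ}

lemma cuspForm_prod (At : ∀ j, Matrix (Fin (nn j)) (Fin (nn j + mm j)) ℝ)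
    (Bj : ∀ j, Matrix (Option (Fin (nn j + mm j))) (Fin (mm j)) ℝ) :
    cuspFormPoly ((bigDiagConfig At).submatrix some id) (bigGale Bj) =
      ∏ j, MvPolynomial.rename (fun l : Fin (mm j) => (⟨j, l⟩ : Σ j, Fin (mm j)))
        (cuspFormPoly ((diagConfig (At j)).submatrix some id) (Bj j)) := by
  classical
  -- RHS transformation
  rw [Finset.prod_congr rfl (fun j _ => rename_cuspForm_block At Bj j),
    Finset.prod_univ_sum]
  -- LHS transformation
  have hLHS : cuspFormPoly ((bigDiagConfig At).submatrix some id) (bigGale Bj)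
      = ∑ T ∈ (univ : Finset (Σ j, Fin (nn j + mm j))).powersetCard
          (Fintype.card (Σ j, Fin (nn j))),
        C (detSqIf ((bigDiagConfig At).submatrix some id) (T.image some)) *
          ∏ k ∈ T.image some, ∑ l, C (bigGale Bj k l) * X l := by
    rw [cuspFormPoly_eq_sum,
      sum_powersetCard_option (Fintype.card (Σ j, Fin (nn j)))
        (fun s => C (detSqIf ((bigDiagConfig At).submatrix some id) s) *
          ∏ k ∈ s, ∑ l, C (bigGale Bj k l) * X l)
        (by
          intro s hcard hnone
          have hz : detSqIf ((bigDiagConfig At).submatrix some id) s = 0 := by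
            rw [detSqIf, dif_pos hcard]
            refine detSq_eq_zero_of_zero_col _ _ _ hnone ?_
            rintro ⟨j, p⟩
            rfl
          simp only [hz, map_zero, zero_mul])]
  rw [hLHS]
  -- split into balanced and unbalanced
  rw [← Finset.sum_filter_add_sum_filter_not
    ((univ : Finset (Σ j, Fin (nn j + mm j))).powersetCard (Fintype.card (Σ j, Fin (nn j))))
    (fun T => ∀ j, (T.preimage (Sigma.mk j) sigma_mk_injective.injOn).card = nn j)]
  have hzero : ∑ T ∈ ((univ : Finset (Σ j, Fin (nn j + mm j))).powersetCard
        (Fintype.card (Σ j, Fin (nn j)))).filter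
        (fun T => ¬ ∀ j, (T.preimage (Sigma.mk j) sigma_mk_injective.injOn).card = nn j),
      C (detSqIf ((bigDiagConfig At).submatrix some id) (T.image some)) *
        ∏ k ∈ T.image some, ∑ l, C (bigGale Bj k l) * X l = 0 := by
    refine Finset.sum_eq_zero fun T hT => ?_
    obtain ⟨hTP, hnb⟩ := Finset.mem_filter.mp hT
    have hTcard := (mem_powersetCard.mp hTP).2
    have hsig : univ.sigma (fun j => T.preimage (Sigma.mk j) sigma_mk_injective.injOn) = T := by
      ext x
      obtain ⟨j, q⟩ := x
      simp [Finset.mem_sigma, Finset.mem_preimage]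
    have hcnt := Finset.card_sigma univ
      (fun j => T.preimage (Sigma.mk j) sigma_mk_injective.injOn)
    rw [hsig] at hcnt
    have hntot : Fintype.card (Σ j, Fin (nn j)) = ∑ j, nn j := by simp
    push_neg at hnb
    obtain ⟨j0, hj0⟩ := hnb
    have hex : ∃ jstar, nn jstar
        < (T.preimage (Sigma.mk jstar) sigma_mk_injective.injOn).card := by
      by_contra hcon
      push_neg at hcon
      have hlt : ∑ j, (T.preimage (Sigma.mk j) sigma_mk_injective.injOn).card < ∑ j, nn j :=
        Finset.sum_lt_sum (fun j _ => hcon j)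
          ⟨j0, Finset.mem_univ _, lt_of_le_of_ne (hcon j0) hj0⟩
      omega
    obtain ⟨jstar, hjstar⟩ := hex
    have hcardT : (T.image some).card = Fintype.card (Σ j, Fin (nn j)) := by
      rw [Finset.card_image_of_injective _ (Option.some_injective _), hTcard]
    have hz : detSqIf ((bigDiagConfig At).submatrix some id) (T.image some) = 0 := by
      rw [detSqIf, dif_pos hcardT]
      exact detSq_big_unbalanced At T hcardT jstar hjstar
    simp only [hz, map_zero, zero_mul]
  rw [hzero, add_zero]
  -- the bijection between balanced subsets and tuples
  let phi : Finset (Σ j, Fin (nn j + mm j)) → ∀ j : Fin r, Finset (Fin (nn j + mm j)) :=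
    fun T j => T.preimage (Sigma.mk (β := fun j => Fin (nn j + mm j)) j)
      (by exact sigma_mk_injective.injOn)
  refine Finset.sum_nbij' phi
    (fun (p : ∀ j, Finset (Fin (nn j + mm j))) => univ.sigma p) ?_ ?_ ?_ ?_ ?_
  · intro T hT
    obtain ⟨hTP, hbal⟩ := Finset.mem_filter.mp hT
    refine Fintype.mem_piFinset.mpr fun j => mem_powersetCard.mpr
      ⟨Finset.subset_univ _, by rw [hbal j, Fintype.card_fin]⟩
  · intro p hp
    have hcards : ∀ j, (p j).card = nn j := by
      intro j
      have := (mem_powersetCard.mp (Fintype.mem_piFinset.mp hp j)).2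
      rwa [Fintype.card_fin] at this
    have hpre : ∀ j, (univ.sigma p).preimage (Sigma.mk j) sigma_mk_injective.injOn = p j := by
      intro j
      ext q
      simp [Finset.mem_preimage, Finset.mem_sigma]
    refine Finset.mem_filter.mpr ⟨mem_powersetCard.mpr ⟨Finset.subset_univ _, ?_⟩, ?_⟩
    · rw [Finset.card_sigma]
      simp only [hcards]
      simp
    · intro j
      rw [hpre j, hcards j]
  · intro T hT
    obtain ⟨hTP, hbal⟩ := Finset.mem_filter.mp hT
    ext x
    obtain ⟨j, q⟩ := x
    simp [phi, Finset.mem_sigma, Finset.mem_preimage]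
  · intro p hp
    funext j
    ext q
    simp [phi, Finset.mem_preimage, Finset.mem_sigma]
  · intro T hT
    obtain ⟨hTP, hbal⟩ := Finset.mem_filter.mp hT
    have hTcard := (mem_powersetCard.mp hTP).2
    have hsig : univ.sigma (fun j => T.preimage (Sigma.mk j) sigma_mk_injective.injOn) = T := by
      ext x
      obtain ⟨j, q⟩ := x
      simp [Finset.mem_sigma, Finset.mem_preimage]
    have hcardT : (T.image some).card = Fintype.card (Σ j, Fin (nn j)) := by
      rw [Finset.card_image_of_injective _ (Option.some_injective _), hTcard]
    have hjj : ∀ j, ((T.preimage (Sigma.mk j) sigma_mk_injective.injOn).image some).card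
        = Fintype.card (Fin (nn j)) := by
      intro j
      rw [Finset.card_image_of_injective _ (Option.some_injective _), hbal j, Fintype.card_fin]
    have hD : detSqIf ((bigDiagConfig At).submatrix some id) (T.image some)
        = ∏ j, detSqIf ((diagConfig (At j)).submatrix some id)
            ((T.preimage (Sigma.mk j) sigma_mk_injective.injOn).image some) := by
      rw [detSqIf, dif_pos hcardT, detSq_big_balanced At T hbal hcardT hjj]
      exact Finset.prod_congr rfl fun j _ => by rw [detSqIf, dif_pos (hjj j)]
    have hP : (∏ k ∈ T.image some, ∑ l, C (bigGale Bj k l) * X l)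
        = ∏ j, ∏ q ∈ T.preimage (Sigma.mk j) sigma_mk_injective.injOn,
            ∑ l, C (Bj j (some q) l) * X (⟨j, l⟩ : Σ j, Fin (mm j)) := by
      rw [Finset.prod_image (fun x _ y _ hxy => Option.some_injective _ hxy)]
      conv_lhs => rw [show T = univ.sigma
        (fun j => T.preimage (Sigma.mk j) sigma_mk_injective.injOn) from hsig.symm]
      rw [Finset.prod_sigma]
      exact Finset.prod_congr rfl fun j _ => Finset.prod_congr rfl fun q _ =>
        bigGale_linform Bj j q
    rw [hD, hP, map_prod, ← Finset.prod_mul_distrib]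
end Poly4


/-- **The cuspidal form of a diagonal configuration is the product of the cuspidal
forms of its diagonal configurations.**  For any Gale duals `B_j` of the diagonal
configurations `A_j` there is a Gale dual `B` of `A` with
`P_A(t₁,…,t_r) = P_{A₁}(t₁) ⋯ P_{A_r}(t_r)`. -/
theorem cuspForm_diag_product {r : ℕ} {nn mm : Fin r → ℕ}
    (At : ∀ j, Matrix (Fin (nn j)) (Fin (nn j + mm j)) ℝ)
    (hArank : (bigDiagConfig At).rank = Fintype.card (Option (Σ j, Fin (nn j))))
    (hrankj : ∀ j, (diagConfig (At j)).rank = nn j + 1)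
    (Bj : ∀ j, Matrix (Option (Fin (nn j + mm j))) (Fin (mm j)) ℝ)
    (hGalej : ∀ j, IsGaleDual (diagConfig (At j)) (Bj j)) :
    ∃ B : Matrix (Option (Σ j, Fin (nn j + mm j))) (Σ j, Fin (mm j)) ℝ,
      IsGaleDual (bigDiagConfig At) B ∧
      cuspFormPoly ((bigDiagConfig At).submatrix some id) B =
        ∏ j, MvPolynomial.rename (fun l : Fin (mm j) => (⟨j, l⟩ : Σ j, Fin (mm j)))
          (cuspFormPoly ((diagConfig (At j)).submatrix some id) (Bj j)) :=
  ⟨bigGale Bj, bigGale_isGaleDual At Bj hGalej, cuspForm_prod At Bj⟩
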